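/- (Limit of the expected bias for K = 1, established inside the proof of Theorem 1, Part 4.) In the AQE tabular setting, suppose additionally that for some constant c > 0 the errors satisfy e^j(a) ≤ c almost surely for all j and a, and that for every a ∈ A the quantity τ_a := inf{ x ∈ ℝ : P(Q^1(a) ≤ x) > 0 } is finite. Then, as N → ∞, E[Z_{1,N}] converges to γ·( max_{a∈A} τ_a − max_{a∈A} Qπ(a) ). In particular, if τ_a < max_{a'∈A} Qπ(a') for all a ∈ A, then E[Z_{1,N}] < 0 for all sufficiently large N. -/

import Mathlib

/-! The minimum of `N + 1` i.i.d. copies of `Q(a)` converges almost surely to `τ_a`: almost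
surely no copy falls below `τ_a`, while for `t > τ_a` the probability that the first `n` copies
all exceed `t` is `P(Q(a) > t)^n → 0`. A maximum over finitely many actions preserves
almost sure convergence, and the integrand is squeezed between the constant
`γ (max τ - max Qπ)` and the integrable `γ (max_a Q^1(a) - max Qπ)`, so dominated convergence
gives the limit of the expectations. -/

open MeasureTheory ProbabilityTheory Finset Filter

/-- The average of the `K` smallest values among `x 0, …, x (N-1)`:
sort the tuple nondecreasingly and average the first `K` entries. -/
noncomputable def avgKSmallest {N : ℕ} (K : ℕ) (x : Fin N → ℝ) : ℝ :=
  (∑ i ∈ Finset.univ.filter (fun i : Fin N => (i : ℕ) < K), x (Tuple.sort x i)) / K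

/-- Maximum of a real-valued function over a finite nonempty type. -/
noncomputable def fmax {A : Type*} [Fintype A] [Nonempty A] (f : A → ℝ) : ℝ :=
  Finset.univ.sup' Finset.univ_nonempty f

open Topology

lemma avgKSmallest_one {N : ℕ} (x : Fin (N + 1) → ℝ) :
    avgKSmallest 1 x = univ.inf' univ_nonempty x := by
  have hfilter : univ.filter (fun i : Fin (N + 1) => (i : ℕ) < 1) = {0} := by
    ext i
    simp only [mem_filter, mem_univ, true_and, mem_singleton, Fin.ext_iff, Nat.lt_one_iff,
      Fin.val_zero]
  rw [avgKSmallest, hfilter, sum_singleton, Nat.cast_one, div_one]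
  refine le_antisymm (le_inf' _ _ fun i _ => ?_) (inf'_le _ (mem_univ _))
  simpa using Tuple.monotone_sort x (Fin.zero_le ((Tuple.sort x).symm i))

section fmax

variable {A : Type*} [Fintype A] [Nonempty A]

lemma fmax_mono {f g : A → ℝ} (h : ∀ a, f a ≤ g a) : fmax f ≤ fmax g :=
  sup'_mono_fun fun a _ => h a

lemma fmax_lt_iff {f : A → ℝ} {b : ℝ} : fmax f < b ↔ ∀ a, f a < b := by
  simp [fmax]

lemma Filter.Tendsto.fmax {α : Type*} {l : Filter α} {f : α → A → ℝ} {g : A → ℝ}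
    (h : ∀ a, Tendsto (fun n => f n a) l (𝓝 (g a))) :
    Tendsto (fun n => _root_.fmax (f n)) l (𝓝 (_root_.fmax g)) :=
  Tendsto.finset_sup'_nhds_apply univ_nonempty fun a _ => h a

end fmax

section integrable

variable {Ω ι β : Type*} [MeasurableSpace Ω] {μ : Measure Ω}
  [NormedAddCommGroup β] [Lattice β] [HasSolidNorm β] [IsOrderedAddMonoid β]
  {s : Finset ι} {f : ι → Ω → β}

lemma Finset.integrable_sup'_apply (hs : s.Nonempty) (hf : ∀ i ∈ s, Integrable (f i) μ) :
    Integrable (fun ω => s.sup' hs (f · ω)) μ := by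
  simpa only [← Finset.sup'_apply] using
    sup'_induction hs f (p := fun g => Integrable g μ) (fun _ hg _ hh => hg.sup hh) hf

lemma Finset.integrable_inf'_apply (hs : s.Nonempty) (hf : ∀ i ∈ s, Integrable (f i) μ) :
    Integrable (fun ω => s.inf' hs (f · ω)) μ := by
  simpa only [← Finset.inf'_apply] using
    inf'_induction hs f (p := fun g => Integrable g μ) (fun _ hg _ hh => hg.inf hh) hf

end integrable

lemma tendsto_integral_of_ae_tendsto_of_le_of_le {Ω : Type*} [MeasurableSpace Ω]
    {μ : Measure Ω} {F : ℕ → Ω → ℝ} {f l u : Ω → ℝ}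
    (hF : ∀ n, AEStronglyMeasurable (F n) μ) (hl : Integrable l μ) (hu : Integrable u μ)
    (hlF : ∀ n, ∀ᵐ ω ∂μ, l ω ≤ F n ω) (hFu : ∀ n, ∀ᵐ ω ∂μ, F n ω ≤ u ω)
    (hlim : ∀ᵐ ω ∂μ, Tendsto (fun n => F n ω) atTop (𝓝 (f ω))) :
    Tendsto (fun n => ∫ ω, F n ω ∂μ) atTop (𝓝 (∫ ω, f ω ∂μ)) :=
  tendsto_integral_of_dominated_convergence (fun ω => max |l ω| |u ω|) hF (hl.abs.sup hu.abs)
    (fun n => by filter_upwards [hlF n, hFu n] with ω h₁ h₂ using abs_le_max_abs_abs h₁ h₂) hlim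

lemma tendsto_inf'_fin_of_forall_le_of_forall_lt {α : Type*} [LinearOrder α]
    [TopologicalSpace α] [OrderTopology α] {x : ℕ → α} {τ : α} (hle : ∀ j, τ ≤ x j)
    (hlt : ∀ u, τ < u → ∃ j, x j < u) :
    Tendsto (fun N => univ.inf' univ_nonempty fun j : Fin (N + 1) => x j) atTop (𝓝 τ) := by
  refine tendsto_order.2 ⟨fun l hl => Eventually.of_forall fun N =>
    hl.trans_le (le_inf' _ _ fun j _ => hle j), fun u hu => ?_⟩
  obtain ⟨j, hj⟩ := hlt u hu
  filter_upwards [eventually_ge_atTop j] with N hN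
  exact (inf'_le _ (mem_univ (⟨j, Nat.lt_succ_of_le hN⟩ : Fin (N + 1)))).trans_lt hj

section supportInf

variable {Ω : Type*} [MeasurableSpace Ω] {μ : Measure Ω}

/-- The paper's `τ_a`: the infimum of the support of the law of `X`. -/
noncomputable def supportInf (μ : Measure Ω) (X : Ω → ℝ) : ℝ :=
  sInf {x | 0 < μ {ω | X ω ≤ x}}

lemma nonempty_setOf_measure_le_pos [NeZero μ] (X : Ω → ℝ) :
    {x | 0 < μ {ω | X ω ≤ x}}.Nonempty := by
  by_contra h
  simp only [Set.not_nonempty_iff_eq_empty, Set.eq_empty_iff_forall_notMem, Set.mem_ofPred_eq,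
    not_lt, nonpos_iff_eq_zero] at h
  refine NeZero.ne μ (Measure.measure_univ_eq_zero.1 (measure_mono_null (fun ω _ => ?_)
    (measure_iUnion_null fun n : ℕ => h n)))
  exact Set.mem_iUnion.2 (exists_nat_ge (X ω))

lemma ae_supportInf_le {X : Ω → ℝ} (hbdd : BddBelow {x | 0 < μ {ω | X ω ≤ x}}) :
    ∀ᵐ ω ∂μ, supportInf μ X ≤ X ω := by
  have hcover : {ω | ¬supportInf μ X ≤ X ω}
      ⊆ ⋃ q : {q : ℚ // (q : ℝ) < supportInf μ X}, {ω | X ω ≤ q} := fun ω hω => by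
    obtain ⟨q, hXq, hq⟩ := exists_rat_btwn (not_le.1 hω)
    exact Set.mem_iUnion.2 ⟨⟨q, hq⟩, hXq.le⟩
  refine ae_iff.2 (measure_mono_null hcover (measure_iUnion_null fun q => ?_))
  simpa using notMem_of_lt_csInf q.2 hbdd

lemma ae_forall_supportInf_le {X : ℕ → Ω → ℝ} (hident : ∀ j, IdentDistrib (X j) (X 0) μ μ)
    (hbdd : BddBelow {x | 0 < μ {ω | X 0 ω ≤ x}}) :
    ∀ᵐ ω ∂μ, ∀ j, supportInf μ (X 0) ≤ X j ω := ae_all_iff.2 fun j =>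
  (hident j).symm.ae_snd (p := (supportInf μ (X 0) ≤ ·)) measurableSet_Ici (ae_supportInf_le hbdd)

lemma measure_lt_pos_of_supportInf_lt [NeZero μ] {X : Ω → ℝ} {t : ℝ}
    (ht : supportInf μ X < t) : 0 < μ {ω | X ω < t} := by
  obtain ⟨x, hx, hxt⟩ := exists_lt_of_csInf_lt (nonempty_setOf_measure_le_pos X) ht
  exact hx.trans_le (measure_mono fun ω hω => lt_of_le_of_lt hω hxt)

end supportInf

section iid

variable {Ω : Type*} [MeasurableSpace Ω] {μ : Measure Ω} [IsProbabilityMeasure μ]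

lemma ProbabilityTheory.iIndepFun.ae_exists_mem {β : Type*} [MeasurableSpace β]
    {X : ℕ → Ω → β} (hindep : iIndepFun X μ) (hident : ∀ j, IdentDistrib (X j) (X 0) μ μ)
    {s : Set β} (hs : MeasurableSet s) (hpos : 0 < μ (X 0 ⁻¹' s)) :
    ∀ᵐ ω ∂μ, ∃ j, X j ω ∈ s := by
  have hp : μ (X 0 ⁻¹' sᶜ) < 1 := by
    rw [Set.preimage_compl, prob_compl_eq_one_sub₀ ((hident 0).aemeasurable_fst.nullMeasurable hs)]
    exact ENNReal.sub_lt_self ENNReal.one_ne_top one_ne_zero hpos.ne'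
  have hle : ∀ n, μ {ω | ¬∃ j, X j ω ∈ s} ≤ μ (X 0 ⁻¹' sᶜ) ^ n := fun n => calc
    μ {ω | ¬∃ j, X j ω ∈ s} ≤ μ (⋂ j ∈ range n, X j ⁻¹' sᶜ) :=
        measure_mono fun ω hω => Set.mem_iInter₂.2 fun j _ hj => hω ⟨j, hj⟩
    _ = ∏ j ∈ range n, μ (X j ⁻¹' sᶜ) :=
        hindep.measure_inter_preimage_eq_mul _ fun _ _ => hs.compl
    _ = μ (X 0 ⁻¹' sᶜ) ^ n := by
        rw [prod_congr rfl fun j _ => (hident j).measure_mem_eq hs.compl, prod_const, card_range]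
  exact ae_iff.2 (le_zero_iff.1
    (ge_of_tendsto' (ENNReal.tendsto_pow_atTop_nhds_zero_of_lt_one hp) hle))

lemma ae_tendsto_inf'_fin_supportInf {X : ℕ → Ω → ℝ} (hindep : iIndepFun X μ)
    (hident : ∀ j, IdentDistrib (X j) (X 0) μ μ)
    (hbdd : BddBelow {x | 0 < μ {ω | X 0 ω ≤ x}}) :
    ∀ᵐ ω ∂μ, Tendsto (fun N => univ.inf' univ_nonempty fun j : Fin (N + 1) => X j ω) atTop
      (𝓝 (supportInf μ (X 0))) := by
  have hlt : ∀ᵐ ω ∂μ, ∀ q : ℚ, supportInf μ (X 0) < q → ∃ j, X j ω < q := by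
    refine ae_all_iff.2 fun q => ?_
    by_cases hq : supportInf μ (X 0) < q
    · have hpos : 0 < μ {ω | X 0 ω < q} := measure_lt_pos_of_supportInf_lt hq
      filter_upwards [hindep.ae_exists_mem hident measurableSet_Iio hpos] with ω hω _ using hω
    · exact Eventually.of_forall fun ω h => absurd h hq
  filter_upwards [ae_forall_supportInf_le hident hbdd, hlt] with ω hω₁ hω₂
  refine tendsto_inf'_fin_of_forall_le_of_forall_lt (x := (X · ω)) hω₁ fun u hu => ?_
  obtain ⟨q, hq, hqu⟩ := exists_rat_btwn hu
  obtain ⟨j, hj⟩ := hω₂ q hq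
  exact ⟨j, hj.trans hqu⟩

end iid

section fmaxInf

variable {Ω A : Type*} [MeasurableSpace Ω] {μ : Measure Ω} [Fintype A] [Nonempty A]
  {X : ℕ → A → Ω → ℝ}

lemma integrable_fmax_inf'_fin (hint : ∀ j a, Integrable (X j a) μ) (N : ℕ) :
    Integrable (fun ω => fmax fun a => univ.inf' univ_nonempty
      fun j : Fin (N + 1) => X j a ω) μ :=
  integrable_sup'_apply _ fun a _ =>
    integrable_inf'_apply (f := fun j : Fin (N + 1) => X j a) _ fun j _ => hint j a

lemma tendsto_integral_fmax_inf'_fin_supportInf [IsProbabilityMeasure μ]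
    (hint : ∀ j a, Integrable (X j a) μ) (hindep : ∀ a, iIndepFun (X · a) μ)
    (hident : ∀ j a, IdentDistrib (X j a) (X 0 a) μ μ)
    (hbdd : ∀ a, BddBelow {x | 0 < μ {ω | X 0 a ω ≤ x}}) :
    Tendsto (fun N => ∫ ω, (fmax fun a => univ.inf' univ_nonempty
      fun j : Fin (N + 1) => X j a ω) ∂μ) atTop (𝓝 (fmax fun a => supportInf μ (X 0 a))) := by
  have hlow : ∀ᵐ ω ∂μ, ∀ a j, supportInf μ (X 0 a) ≤ X j a ω :=
    ae_all_iff.2 fun a => ae_forall_supportInf_le (X := (X · a)) (fun j => hident j a) (hbdd a)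
  have hmin : ∀ᵐ ω ∂μ, ∀ a, Tendsto (fun N => univ.inf' univ_nonempty
      fun j : Fin (N + 1) => X j a ω) atTop (𝓝 (supportInf μ (X 0 a))) := ae_all_iff.2 fun a =>
    ae_tendsto_inf'_fin_supportInf (X := (X · a)) (hindep a) (fun j => hident j a) (hbdd a)
  have h := tendsto_integral_of_ae_tendsto_of_le_of_le
    (l := fun _ => fmax fun a => supportInf μ (X 0 a)) (u := fun ω => fmax (X 0 · ω))
    (integrable_fmax_inf'_fin hint · |>.aestronglyMeasurable) (integrable_const _)
    (integrable_sup'_apply _ fun a _ => hint 0 a)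
    (fun N => by
      filter_upwards [hlow] with ω hω using fmax_mono fun a => le_inf' _ _ fun j _ => hω a j)
    (fun N => Eventually.of_forall fun ω => fmax_mono fun a => inf'_le _ (mem_univ 0))
    (by filter_upwards [hmin] with ω hω using Tendsto.fmax hω)
  rwa [integral_const, probReal_univ, one_smul] at h

end fmaxInf

theorem aqe_expected_bias_keep_one_tendsto_general
    {Ω : Type*} [MeasurableSpace Ω] (μ : Measure Ω) [IsProbabilityMeasure μ]
    {A : Type*} [Fintype A] [Nonempty A]
    (Qpi : A → ℝ) (γ : ℝ) (hγ : 0 < γ)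
    (e : ℕ → A → Ω → ℝ)
    (hint : ∀ j a, Integrable (e j a) μ)
    (hident : ∀ j a j' a', IdentDistrib (e j a) (e j' a') μ μ)
    (hindep : iIndepFun
      (fun p : ℕ × A => e p.1 p.2) μ)
    (Q : ℕ → A → Ω → ℝ) (hQ : ∀ j a ω, Q j a ω = Qpi a + e j a ω)
    (τ : A → ℝ) (hτ : ∀ a, τ a = sInf {x : ℝ | 0 < μ {ω | Q 0 a ω ≤ x}})
    (hbdd : ∀ a, BddBelow {x : ℝ | 0 < μ {ω | Q 0 a ω ≤ x}}) :
    Tendsto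
      (fun N : ℕ =>
        ∫ ω, γ * (fmax (fun a => avgKSmallest 1 (fun j : Fin (N + 1) => Q j a ω)) - fmax Qpi) ∂μ)
      atTop (nhds (γ * (fmax τ - fmax Qpi)))
    ∧ ((∀ a, τ a < fmax Qpi) →
        ∀ᶠ N : ℕ in atTop,
          ∫ ω, γ * (fmax (fun a => avgKSmallest 1 (fun j : Fin (N + 1) => Q j a ω)) - fmax Qpi) ∂μ
            < 0) := by
  have hQe : ∀ j a, Q j a = (Qpi a + ·) ∘ e j a := fun j a => funext (hQ j a)
  have hQint : ∀ j a, Integrable (Q j a) μ := fun j a => by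
    rw [hQe]
    exact (integrable_const (Qpi a)).add (hint j a)
  have hQident : ∀ j a, IdentDistrib (Q j a) (Q 0 a) μ μ := fun j a => by
    rw [hQe, hQe]
    exact (hident j a 0 a).comp (measurable_const_add _)
  have hQindep : ∀ a, iIndepFun (Q · a) μ := fun a => by
    simpa only [hQe] using (hindep.comp (fun p => (Qpi p.2 + ·)) fun _ =>
      measurable_const_add _).precomp (Prod.mk_left_injective a)
  obtain rfl : τ = fun a => supportInf μ (Q 0 a) := funext hτ
  have hbias : Tendsto (fun N => ∫ ω, γ * (fmax (fun a => univ.inf' univ_nonempty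
      fun j : Fin (N + 1) => Q j a ω) - fmax Qpi) ∂μ) atTop
      (𝓝 (γ * ((fmax fun a => supportInf μ (Q 0 a)) - fmax Qpi))) := by
    refine (((tendsto_integral_fmax_inf'_fin_supportInf hQint hQindep hQident hbdd).sub_const
      _).const_mul γ).congr fun N => ?_
    rw [integral_const_mul, integral_sub (integrable_fmax_inf'_fin hQint N) (integrable_const _)]
    simp
  simp only [avgKSmallest_one]
  exact ⟨hbias, fun hlt => hbias.eventually
    (gt_mem_nhds (mul_neg_of_pos_of_neg hγ (sub_neg.2 (fmax_lt_iff.2 hlt))))⟩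

/-- **Limit of the expected bias for `K = 1` (inside the proof of Theorem 1, Part 4).**
In the tabular AQE setting, if the errors are bounded above by a constant `c > 0` almost surely
and each essential infimum `τ_a := inf {x : P(Q^1(a) ≤ x) > 0}` is finite, then
`E[Z_{1,N}] → γ·(max_a τ_a − max_a Qπ(a))` as `N → ∞`; in particular, if `τ_a < max_{a'} Qπ(a')`
for all `a`, then `E[Z_{1,N}] < 0` for all sufficiently large `N`. -/
theorem aqe_expected_bias_keep_one_tendsto
    {Ω : Type*} [MeasurableSpace Ω] (μ : Measure Ω) [IsProbabilityMeasure μ]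
    {A : Type*} [Fintype A] [Nonempty A]
    (Qpi : A → ℝ) (γ : ℝ) (hγ : 0 < γ)
    (e : ℕ → A → Ω → ℝ)
    (hint : ∀ j a, Integrable (e j a) μ)
    (hmean : ∀ j a, ∫ ω, e j a ω ∂μ = 0)
    (hident : ∀ j a j' a', IdentDistrib (e j a) (e j' a') μ μ)
    (hindep : iIndepFun
      (fun p : ℕ × A => e p.1 p.2) μ)
    (Q : ℕ → A → Ω → ℝ) (hQ : ∀ j a ω, Q j a ω = Qpi a + e j a ω)
    (c : ℝ) (hc : 0 < c) (hbound : ∀ j a, ∀ᵐ ω ∂μ, e j a ω ≤ c)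
    (τ : A → ℝ) (hτ : ∀ a, τ a = sInf {x : ℝ | 0 < μ {ω | Q 0 a ω ≤ x}})
    (hne : ∀ a, {x : ℝ | 0 < μ {ω | Q 0 a ω ≤ x}}.Nonempty)
    (hbdd : ∀ a, BddBelow {x : ℝ | 0 < μ {ω | Q 0 a ω ≤ x}}) :
    Tendsto
      (fun N : ℕ =>
        ∫ ω, γ * (fmax (fun a => avgKSmallest 1 (fun j : Fin (N + 1) => Q j a ω)) - fmax Qpi) ∂μ)
      atTop (nhds (γ * (fmax τ - fmax Qpi)))
    ∧ ((∀ a, τ a < fmax Qpi) →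
        ∀ᶠ N : ℕ in atTop,
          ∫ ω, γ * (fmax (fun a => avgKSmallest 1 (fun j : Fin (N + 1) => Q j a ω)) - fmax Qpi) ∂μ
            < 0) :=
  aqe_expected_bias_keep_one_tendsto_general μ Qpi γ hγ e hint hident hindep Q hQ τ hτ hbdd
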